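/- For any Finsler manifold (M,F), the Sasaki lifted metric G on TM is not bundle-like for the one-dimensional foliation spanned by the vertical Liouville vector field L, nor for the two-dimensional foliation spanned by L and the horizontal Liouville vector field ξ: one has G(∇_{∂̄/∂̄y^a} ∂̄/∂̄y^b + ∇_{∂̄/∂̄y^b} ∂̄/∂̄y^a, L) = −2 g_{ab}, and g_{ab} = 0 is impossible since (g_{ab}) is positive definite. -/

import Mathlib

/-!
A local-coordinate framework for the geometry of the tangent bundle `TM` of an
`n`-dimensional Finsler manifold `(M, F)`, following the paper
"A frame on tangent bundle of a Finsler manifold and the natural foliations".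

All geometric objects are described through their components on a chart domain
`U` of `TM` (avoiding the zero section): a point `p : Pt n` is the pair of
coordinates `(x^i, y^i)`, and a vector field on `TM` is given by its
components in the natural frame `(∂/∂x^i, ∂/∂y^i)`.
-/

open scoped BigOperators

noncomputable section

namespace FinslerFoliations

/-- A point of the tangent bundle `TM` in local coordinates:
`p.1 = (x^i)` is the base point and `p.2 = (y^i)` is the fibre coordinate. -/
abbrev Pt (n : ℕ) : Type := (Fin n → ℝ) × (Fin n → ℝ)

/-- A (local) vector field on `TM`, given by its components in the natural
frame: `(X p).1 i` is the coefficient of `∂/∂x^i` and `(X p).2 i` the one of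
`∂/∂y^i`. -/
abbrev VF (n : ℕ) : Type := Pt n → Pt n

variable {n : ℕ}

/-- The coordinate vector `∂/∂x^i`. -/
def ex (i : Fin n) : Pt n := (Pi.single i 1, 0)

/-- The coordinate vector `∂/∂y^i`. -/
def ey (i : Fin n) : Pt n := (0, Pi.single i 1)

/-- Partial derivative of a scalar function in the constant direction `v`. -/
def pd (v : Pt n) (f : Pt n → ℝ) (p : Pt n) : ℝ := fderiv ℝ f p v

/-- Derivative of a scalar function along a vector field. -/
def Dv (X : VF n) (f : Pt n → ℝ) (p : Pt n) : ℝ := fderiv ℝ f p (X p)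

/-- The Lie bracket of two vector fields, in coordinates. -/
def lie (X Y : VF n) : VF n := fun p => fderiv ℝ Y p (X p) - fderiv ℝ X p (Y p)

/-- Local-coordinate data of an `n`-dimensional Finsler manifold `(M, F)` on a
chart domain `U ⊆ TM` avoiding the zero section: the fundamental function `F`
(smooth, positive and positively `1`-homogeneous in `y`), the fundamental
tensor `g_{ij} = ½ ∂²F²/∂y^i∂y^j` (symmetric and positive definite) with its
inverse `g^{ij}`, the spray coefficients
`G^i = (g^{ij}/4)(∂²F²/∂y^j∂x^k y^k − ∂F²/∂x^j)` and the nonlinear connection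
coefficients `G_i^j = ∂G^j/∂y^i`. -/
structure Chart (n : ℕ) : Type where
  /-- the chart domain in `TM` -/
  U : Set (Pt n)
  hUopen : IsOpen U
  hUslit : ∀ p ∈ U, p.2 ≠ 0
  /-- the fundamental function `F` -/
  F : Pt n → ℝ
  Fpos : ∀ p ∈ U, 0 < F p
  Fsmooth : ContDiffOn ℝ (⊤ : ℕ∞) F U
  Fhomog : ∀ p ∈ U, ∀ t : ℝ, 0 < t → (p.1, t • p.2) ∈ U →
    F (p.1, t • p.2) = t * F p
  /-- the fundamental tensor `g_{ij}` -/
  g : Fin n → Fin n → Pt n → ℝ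
  gdef : ∀ i j, ∀ p ∈ U,
    g i j p = (1/2) * pd (ey i) (pd (ey j) (fun q => F q ^ 2)) p
  gsmooth : ∀ i j, ContDiffOn ℝ (⊤ : ℕ∞) (g i j) U
  gsymm : ∀ i j, ∀ p ∈ U, g i j p = g j i p
  gposdef : ∀ p ∈ U, ∀ v : Fin n → ℝ, v ≠ 0 →
    0 < ∑ i, ∑ j, g i j p * v i * v j
  /-- the inverse `g^{ij}` of the fundamental tensor -/
  ginv : Fin n → Fin n → Pt n → ℝ
  hginv : ∀ i j, ∀ p ∈ U,
    (∑ k, g i k p * ginv k j p) = if i = j then (1:ℝ) else 0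
  /-- the spray coefficients `G^i` -/
  spray : Fin n → Pt n → ℝ
  spraydef : ∀ i, ∀ p ∈ U, spray i p = (1/4) * ∑ j, ginv i j p *
      ((∑ k, pd (ey j) (pd (ex k) (fun q => F q ^ 2)) p * p.2 k)
        - pd (ex j) (fun q => F q ^ 2) p)
  /-- the nonlinear connection coefficients `G_i^j` -/
  N : Fin n → Fin n → Pt n → ℝ
  Ndef : ∀ i j, ∀ p ∈ U, N i j p = pd (ey i) (spray j) p
  Nsmooth : ∀ i j, ContDiffOn ℝ (⊤ : ℕ∞) (N i j) U

variable (fc : Chart n)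

/-- the vertical frame field `∂/∂y^i`. -/
def dyv (i : Fin n) : VF n := fun _ => ey i

/-- the horizontal frame field `δ/δx^i = ∂/∂x^i − G_i^j ∂/∂y^j`. -/
def ddx (i : Fin n) : VF n := fun p => (Pi.single i 1, fun j => -(fc.N i j p))

/-- the vertical Liouville vector field `L = y^i ∂/∂y^i`. -/
def LV : VF n := fun p => ((0 : Fin n → ℝ), p.2)

/-- the horizontal Liouville vector field `ξ = y^i δ/δx^i`. -/
def XI : VF n := fun p => (p.2, fun j => -(∑ i, p.2 i * fc.N i j p))

/-- the dual coframe `δy^i = dy^i + G_j^i dx^j`, applied to a tangent vector. -/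
def dely (i : Fin n) (p : Pt n) (v : Pt n) : ℝ := v.2 i + ∑ j, fc.N j i p * v.1 j

/-- the Sasaki lifted metric `G = g_{ij} dx^i ⊗ dx^j + g_{ij} δy^i ⊗ δy^j`. -/
def Gs (p : Pt n) (v w : Pt n) : ℝ :=
  ∑ i, ∑ j, fc.g i j p * (v.1 i * w.1 j + dely fc i p v * dely fc j p w)

/-- the natural almost complex structure
`J = δ/δx^i ⊗ δy^i − ∂/∂y^i ⊗ dx^i`, as a pointwise endomorphism. -/
def Jm (p : Pt n) (v : Pt n) : Pt n :=
  (fun i => dely fc i p v,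
   fun k => -(∑ i, dely fc i p v * fc.N i k p) - v.1 k)

/-- `J` applied to a vector field. -/
def Jvf (X : VF n) : VF n := fun p => Jm fc p (X p)

/-- the curvature coefficients `R^k_{ij} = δG_i^k/δx^j − δG_j^k/δx^i` of the
nonlinear connection. -/
def Rc (i j k : Fin n) (p : Pt n) : ℝ :=
  Dv (ddx fc j) (fc.N i k) p - Dv (ddx fc i) (fc.N j k) p

/-- the Cartan tensor `g_{ijk} = ½ ∂g_{ij}/∂y^k`. -/
def Cartan (i j k : Fin n) (p : Pt n) : ℝ := (1/2) * pd (ey k) (fc.g i j) p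

/-- the vertical adapted frame field `∂̄/∂̄y^a = E_a^i ∂/∂y^i`. -/
def vb (E : Fin (n-1) → Fin n → Pt n → ℝ) (a : Fin (n-1)) : VF n :=
  fun p => ((0 : Fin n → ℝ), fun i => E a i p)

/-- the horizontal adapted frame field `δ̄/δ̄x^a = J(∂̄/∂̄y^a)`. -/
def hb (E : Fin (n-1) → Fin n → Pt n → ℝ) (a : Fin (n-1)) : VF n :=
  fun p => Jm fc p (vb E a p)

/-- `E` is the coefficient matrix of an adapted local frame
`∂̄/∂̄y^a = E_a^i ∂/∂y^i`, `a = 1, …, n−1`, of the distribution `V'TM` (the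
`G`-orthogonal complement of the vertical Liouville field `L` inside the
vertical distribution `VTM`): the coefficients are smooth, pointwise linearly
independent, and each `∂̄/∂̄y^a` is `G`-orthogonal to `L`. -/
def IsAdaptedFrame (E : Fin (n-1) → Fin n → Pt n → ℝ) : Prop :=
  (∀ a i, ContDiffOn ℝ (⊤ : ℕ∞) (E a i) fc.U) ∧
  (∀ p ∈ fc.U, LinearIndependent ℝ (fun a : Fin (n-1) => (fun i => E a i p))) ∧
  (∀ a, ∀ p ∈ fc.U, Gs fc p (vb E a p) (LV p) = 0)

/-- `g_{ab} = g_{ij} E_a^i E_b^j`, the components of the Sasaki metric in the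
adapted frame. -/
def gb (E : Fin (n-1) → Fin n → Pt n → ℝ) (p : Pt n) (a b : Fin (n-1)) : ℝ :=
  ∑ i, ∑ j, fc.g i j p * E a i p * E b j p

/-- the matrix `(g_{ab})`. -/
def gbMat (E : Fin (n-1) → Fin n → Pt n → ℝ) (p : Pt n) :
    Matrix (Fin (n-1)) (Fin (n-1)) ℝ :=
  Matrix.of fun a b => gb fc E p a b

/-- `(g^{ab})`, the inverse of the matrix `(g_{ab})`. -/
def gbInv (E : Fin (n-1) → Fin n → Pt n → ℝ) (p : Pt n) (a b : Fin (n-1)) : ℝ :=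
  (gbMat fc E p)⁻¹ a b

/-- `g_{abc} = ½ E_a^i E_b^j E_c^k g_{ijk}`, the Cartan tensor in the adapted
frame. -/
def CartanBar (E : Fin (n-1) → Fin n → Pt n → ℝ) (a b c : Fin (n-1))
    (p : Pt n) : ℝ :=
  (1/2) * ∑ i, ∑ j, ∑ k, E a i p * E b j p * E c k p * Cartan fc i j k p

/-- `R_{cab} = E_c^i E_a^j E_b^k R^h_{jk} g_{hi}`, the lowered curvature of the
nonlinear connection in the adapted frame. -/
def Rlow (E : Fin (n-1) → Fin n → Pt n → ℝ) (c a b : Fin (n-1)) (p : Pt n) : ℝ :=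
  ∑ i, ∑ j, ∑ k, ∑ h, E c i p * E a j p * E b k p * Rc fc j k h p * fc.g h i p

/-- `nab` is the Levi-Civita connection of the Sasaki metric `G` on the chart
domain, characterized by the Koszul formula
`2G(∇_X Y, Z) = X G(Y,Z) + Y G(X,Z) − Z G(X,Y)
  − G([X,Z],Y) − G([Y,Z],X) + G([X,Y],Z)`. -/
def IsLeviCivita (nab : VF n → VF n → VF n) : Prop :=
  ∀ X Y Z : VF n,
    ContDiffOn ℝ (⊤ : ℕ∞) X fc.U → ContDiffOn ℝ (⊤ : ℕ∞) Y fc.U →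
    ContDiffOn ℝ (⊤ : ℕ∞) Z fc.U → ∀ p ∈ fc.U,
    2 * Gs fc p (nab X Y p) (Z p) =
      Dv X (fun q => Gs fc q (Y q) (Z q)) p
      + Dv Y (fun q => Gs fc q (X q) (Z q)) p
      - Dv Z (fun q => Gs fc q (X q) (Y q)) p
      - Gs fc p (lie X Z p) (Y p)
      - Gs fc p (lie Y Z p) (X p)
      + Gs fc p (lie X Y p) (Z p)

/-- the `G`-orthogonal projection of a vector field onto the line spanned by
the vertical Liouville field `L` (the normal direction to the indicatrix). -/
def projL (X : VF n) : VF n :=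
  fun p => (Gs fc p (X p) (LV p) / Gs fc p (LV p) (LV p)) • LV p

/-- the curvature tensor `R(X,Y)Z = ∇_X ∇_Y Z − ∇_Y ∇_X Z − ∇_{[X,Y]} Z` of a
connection. -/
def curv (nab : VF n → VF n → VF n) (X Y Z : VF n) : VF n :=
  fun p => nab X (nab Y Z) p - nab Y (nab X Z) p - nab (lie X Y) Z p

/-- membership in `V'TM`: vertical and `G`-orthogonal to `L`. -/
def InV' (p v : Pt n) : Prop := v.1 = 0 ∧ Gs fc p v (LV p) = 0

/-- membership in `V^⊥TM`: `G`-orthogonal to `L`. -/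
def InVperp (p v : Pt n) : Prop := Gs fc p v (LV p) = 0

/-- membership in `HTM ⊕ ⟨L⟩`, the `G`-orthogonal complement of `V'TM`. -/
def InHL (p v : Pt n) : Prop := ∃ c : ℝ, ∀ i, dely fc i p v = c * p.2 i

/-- membership in the line spanned by the vertical Liouville field `L`. -/
def InL (p v : Pt n) : Prop := ∃ c : ℝ, v = c • LV p

/-- membership in the plane spanned by `L` and `ξ`. -/
def InLXi (p v : Pt n) : Prop := ∃ c d : ℝ, v = c • LV p + d • XI fc p

/-- membership in the `G`-orthogonal complement of `⟨L, ξ⟩`. -/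
def InLXiPerp (p v : Pt n) : Prop :=
  Gs fc p v (LV p) = 0 ∧ Gs fc p v (XI fc p) = 0

/-- the contact `1`-form `η = y^i g_{ij} dx^j` of the indicatrix bundle,
applied to a tangent vector. -/
def etaC (p : Pt n) (v : Pt n) : ℝ := ∑ i, ∑ j, p.2 i * fc.g i j p * v.1 j

/-- the `(1,1)`-tensor `φ` of the contact structure of the indicatrix bundle:
`φ = J` on the contact distribution `D` and `φ(ξ) = 0`; on tangent vectors of
`IM` it is given by `φ(v) = J v + η(v) L`. -/
def phiC (p : Pt n) (v : Pt n) : Pt n := Jm fc p v + etaC fc p v • LV p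

/-- `φ` applied to a vector field. -/
def phiVF (X : VF n) : VF n := fun p => phiC fc p (X p)

/-- `η` applied to a vector field, as a scalar function. -/
def etaVF (X : VF n) : Pt n → ℝ := fun p => etaC fc p (X p)

/-- the exterior derivative `dη(X,Y) = X(η(Y)) − Y(η(X)) − η([X,Y])`. -/
def dEta (X Y : VF n) (p : Pt n) : ℝ :=
  Dv X (etaVF fc Y) p - Dv Y (etaVF fc X) p - etaC fc p (lie X Y p)

/-- the normality tensor `N^{(1)} = [φ,φ] + 2 dη ⊗ ξ` of the contact structure
of the indicatrix bundle, evaluated on vector fields, where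
`[φ,φ](X,Y) = φ²[X,Y] + [φX,φY] − φ[φX,Y] − φ[X,φY]` is the Nijenhuis torsion
of `φ`. -/
def Ntensor (X Y : VF n) : VF n := fun p =>
  phiC fc p (phiC fc p (lie X Y p)) + lie (phiVF fc X) (phiVF fc Y) p
    - phiC fc p (lie (phiVF fc X) Y p) - phiC fc p (lie X (phiVF fc Y) p)
    + (2 * dEta fc X Y p) • XI fc p

/-- a vector field of `TM` is tangent to the indicatrix bundle
`IM = {F = 1}` (equivalently, `G`-orthogonal to the normal field `L` along
`IM`). -/
def TangentIM (X : VF n) : Prop :=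
  ∀ p ∈ fc.U, fc.F p = 1 → Gs fc p (X p) (LV p) = 0

/-- The indicatrix bundle `IM`, with its natural contact metric structure
`(φ, η, ξ, Ḡ)`, is a Sasakian manifold: the contact structure is normal, i.e.
the tensor `N^{(1)} = [φ,φ] + 2 dη ⊗ ξ` vanishes on vector fields tangent to
`IM`. -/
def IsSasakianIM : Prop :=
  ∀ X Y : VF n, ContDiffOn ℝ (⊤ : ℕ∞) X fc.U → ContDiffOn ℝ (⊤ : ℕ∞) Y fc.U →
    TangentIM fc X → TangentIM fc Y →
    ∀ p ∈ fc.U, fc.F p = 1 → Ntensor fc X Y p = 0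

/-- the Nijenhuis tensor of the natural almost complex structure `J`:
`N_J(X,Y) = [JX,JY] − J[JX,Y] − J[X,JY] + J²[X,Y]`, with `J² = −Id`. -/
def NijJ (X Y : VF n) : VF n := fun p =>
  lie (Jvf fc X) (Jvf fc Y) p - Jm fc p (lie (Jvf fc X) Y p)
    - Jm fc p (lie X (Jvf fc Y) p) - lie X Y p

/-- the almost complex structure `J̄` on `TM ≅ IM × ℝ` induced by the contact
structure `(φ, η, ξ)` of the indicatrix bundle via
`J̄(X + f L) = φ(X) − f ξ + η(X) L`, where `X` is tangent to `IM`;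
a tangent vector `v` is decomposed as `v = vᵀ + f L` with
`f = G(v,L)/G(L,L)` and `vᵀ` tangent to the indicatrix. -/
def Jbar (p : Pt n) (v : Pt n) : Pt n :=
  phiC fc p (v - (Gs fc p v (LV p) / Gs fc p (LV p) (LV p)) • LV p)
    - (Gs fc p v (LV p) / Gs fc p (LV p) (LV p)) • XI fc p
    + etaC fc p (v - (Gs fc p v (LV p) / Gs fc p (LV p) (LV p)) • LV p) • LV p

/-!
Adding the Koszul formulas for `∇_X Y` and `∇_Y X` cancels the bracket `[X,Y]`. For
`X = ∂̄/∂̄y^a`, `Y = ∂̄/∂̄y^b`, `Z = L`, the terms `X G(Y,L)` and `Y G(X,L)` vanish because the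
frame is orthogonal to `L`, and `L g_{ij} = 0` because `g_{ij}` is `0`-homogeneous in `y`
(Euler's relation for `F²`, differentiated twice in `y`). Since
`[∂̄/∂̄y^a, L] = ∂̄/∂̄y^a − L(E_a^i) ∂/∂y^i`, the `L`-derivatives of the frame cancel and
`−2 g_{ab}` remains. For `a = b` this is nonzero, while `∂̄/∂̄y^a`, being vertical, is also
orthogonal to `ξ`; so neither foliation admits `G` as a bundle-like metric.
-/

theorem hasFDerivAt_LV (p : Pt n) :
    HasFDerivAt (LV (n := n))
      ((0 : Pt n →L[ℝ] (Fin n → ℝ)).prod (ContinuousLinearMap.snd ℝ _ _)) p :=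
  (hasFDerivAt_const _ _).prodMk hasFDerivAt_snd

theorem fderiv_LV_apply (p v : Pt n) : fderiv ℝ (LV (n := n)) p v = LV v := by
  rw [(hasFDerivAt_LV p).fderiv]; rfl

theorem LV_of_fst_eq_zero {v : Pt n} (hv : v.1 = 0) : LV v = v := by
  ext1
  · exact hv.symm
  · rfl

theorem contDiff_LV : ContDiff ℝ (⊤ : ℕ∞) (LV (n := n)) :=
  contDiff_const.prodMk contDiff_snd

theorem fderiv_pd {f : Pt n → ℝ} {p : Pt n} (hf : DifferentiableAt ℝ (fderiv ℝ f) p)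
    (v w : Pt n) : fderiv ℝ (pd v f) p w = fderiv ℝ (fderiv ℝ f) p w v := by
  unfold pd
  rw [fderiv_clm_apply hf (differentiableAt_const v)]
  simp

theorem contDiffOn_pd {U : Set (Pt n)} (hU : IsOpen U) {f : Pt n → ℝ}
    (hf : ContDiffOn ℝ (⊤ : ℕ∞) f U) (v : Pt n) : ContDiffOn ℝ (⊤ : ℕ∞) (pd v f) U :=
  (((contDiffOn_infty_iff_fderiv_of_isOpen hU).1 hf).2).clm_apply contDiffOn_const

theorem Dv_LV_of_homogeneous {U : Set (Pt n)} (hU : IsOpen U) {f : Pt n → ℝ} (m : ℕ)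
    (hhom : ∀ p ∈ U, ∀ t : ℝ, 0 < t → (p.1, t • p.2) ∈ U → f (p.1, t • p.2) = t ^ m * f p)
    {p : Pt n} (hp : p ∈ U) (hf : DifferentiableAt ℝ f p) :
    Dv LV f p = m * f p := by
  set γ : ℝ → Pt n := fun t => (p.1, t • p.2)
  have hγ1 : γ 1 = p := by simp [γ]
  have hγ : HasDerivAt γ (LV p) 1 :=
    (hasDerivAt_const 1 p.1).prodMk (by simpa using (hasDerivAt_id (1 : ℝ)).smul_const p.2)
  have hcomp : HasDerivAt (f ∘ γ) (Dv LV f p) 1 :=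
    (hγ1 ▸ hf.hasFDerivAt : HasFDerivAt f (fderiv ℝ f p) (γ 1)).comp_hasDerivAt 1 hγ
  have hnear : (fun t : ℝ => t ^ m * f p) =ᶠ[nhds 1] f ∘ γ := by
    have hγU : ∀ᶠ t in nhds (1 : ℝ), γ t ∈ U :=
      (by fun_prop : Continuous γ).continuousAt.preimage_mem_nhds (hγ1 ▸ hU.mem_nhds hp)
    filter_upwards [hγU, lt_mem_nhds one_pos] with t htU ht0
    exact (hhom p hp t ht0 htU).symm
  have hpow : HasDerivAt (fun t : ℝ => t ^ m * f p) (m * f p) 1 := by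
    simpa using (hasDerivAt_pow m (1 : ℝ)).mul_const (f p)
  exact (hcomp.congr_of_eventuallyEq hnear).unique hpow

theorem Dv_LV_pd {U : Set (Pt n)} (hU : IsOpen U) {f : Pt n → ℝ}
    (hf : ContDiffOn ℝ (⊤ : ℕ∞) f U) {m : ℝ} (heuler : ∀ q ∈ U, Dv LV f q = m * f q)
    {v : Pt n} (hv : v.1 = 0) {p : Pt n} (hp : p ∈ U) :
    Dv LV (pd v f) p = (m - 1) * pd v f p := by
  have hfp : ContDiffAt ℝ (⊤ : ℕ∞) f p := hf.contDiffAt (hU.mem_nhds hp)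
  have hdf : DifferentiableAt ℝ (fderiv ℝ f) p :=
    (hfp.fderiv_right (m := 1) (by norm_cast)).differentiableAt one_ne_zero
  have hsymm : IsSymmSndFDerivAt ℝ f p :=
    hfp.isSymmSndFDerivAt (by simp; norm_cast)
  have hnear : (fun q => fderiv ℝ f q (LV q)) =ᶠ[nhds p] fun q => m * f q :=
    Filter.eventuallyEq_of_mem (hU.mem_nhds hp) heuler
  have hdiff : fderiv ℝ (fun q => fderiv ℝ f q (LV q)) p v
      = fderiv ℝ (fun q => m * f q) p v := by
    rw [hnear.fderiv_eq]
  rw [fderiv_clm_apply hdf (hasFDerivAt_LV p).differentiableAt, fderiv_const_mul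
    (hfp.differentiableAt (by simp))] at hdiff
  simp only [add_apply, ContinuousLinearMap.comp_apply,
    ContinuousLinearMap.flip_apply, fderiv_LV_apply, LV_of_fst_eq_zero hv,
    smul_apply, smul_eq_mul] at hdiff
  rw [Dv, fderiv_pd hdf, hsymm.eq, pd]
  linarith

theorem Dv_LV_Fsq {p : Pt n} (hp : p ∈ fc.U) :
    Dv LV (fun q => fc.F q ^ 2) p = 2 * fc.F p ^ 2 := by
  have hdiff : DifferentiableAt ℝ (fun q => fc.F q ^ 2) p :=
    ((fc.Fsmooth.contDiffAt (fc.hUopen.mem_nhds hp)).differentiableAt (by simp)).pow 2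
  exact_mod_cast Dv_LV_of_homogeneous fc.hUopen 2
    (fun q hq t ht htU => by simp only [fc.Fhomog q hq t ht htU]; ring) hp hdiff

theorem Dv_LV_g (i j : Fin n) {p : Pt n} (hp : p ∈ fc.U) : Dv LV (fc.g i j) p = 0 := by
  have hFsq : ContDiffOn ℝ (⊤ : ℕ∞) (fun q => fc.F q ^ 2) fc.U := fc.Fsmooth.pow 2
  have hdeg1 : ∀ q ∈ fc.U, Dv LV (pd (ey j) fun q => fc.F q ^ 2) q
      = 1 * pd (ey j) (fun q => fc.F q ^ 2) q := fun q hq => by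
    rw [Dv_LV_pd fc.hUopen hFsq (m := 2) (fun q hq => Dv_LV_Fsq fc hq) rfl hq]
    norm_num
  have hdeg0 := Dv_LV_pd fc.hUopen (contDiffOn_pd fc.hUopen hFsq (ey j)) hdeg1
    (v := ey i) rfl hp
  have hg : fc.g i j =ᶠ[nhds p] fun q => (1 / 2) * pd (ey i) (pd (ey j) fun q => fc.F q ^ 2) q :=
    Filter.eventuallyEq_of_mem (fc.hUopen.mem_nhds hp) (fc.gdef i j)
  have hchi : DifferentiableAt ℝ (pd (ey i) (pd (ey j) fun q => fc.F q ^ 2)) p :=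
    ((contDiffOn_pd fc.hUopen (contDiffOn_pd fc.hUopen hFsq (ey j)) (ey i)).contDiffAt
      (fc.hUopen.mem_nhds hp)).differentiableAt (by simp)
  rw [Dv, hg.fderiv_eq, fderiv_const_mul hchi]
  simp only [smul_apply, smul_eq_mul]
  rw [← Dv, hdeg0]
  ring

theorem Gs_add_left (p u w z : Pt n) : Gs fc p (u + w) z = Gs fc p u z + Gs fc p w z := by
  simp only [Gs, dely, Prod.fst_add, Prod.snd_add, Pi.add_apply, ← Finset.sum_add_distrib]
  refine Finset.sum_congr rfl fun i _ => Finset.sum_congr rfl fun j _ => ?_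
  simp only [mul_add, Finset.sum_add_distrib]
  ring

theorem Gs_sub_left (p u w z : Pt n) : Gs fc p (u - w) z = Gs fc p u z - Gs fc p w z := by
  rw [eq_sub_iff_add_eq, ← Gs_add_left, sub_add_cancel]

theorem Gs_comm {p : Pt n} (hp : p ∈ fc.U) (v w : Pt n) : Gs fc p v w = Gs fc p w v := by
  rw [Gs, Finset.sum_comm]
  refine Finset.sum_congr rfl fun i _ => Finset.sum_congr rfl fun j _ => ?_
  rw [fc.gsymm j i p hp]
  ring

theorem Gs_vert (p : Pt n) (u w : Fin n → ℝ) :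
    Gs fc p (0, u) (0, w) = ∑ i, ∑ j, fc.g i j p * (u i * w j) := by
  simp [Gs, dely]

theorem Gs_vert_XI (p : Pt n) (u : Fin n → ℝ) : Gs fc p (0, u) (XI fc p) = 0 := by
  have hdely : ∀ j, dely fc j p (XI fc p) = 0 := fun j => by
    simp only [dely, XI, mul_comm (fc.N _ j p), neg_add_cancel]
  simp [Gs, hdely]

theorem Gs_vb_vb (E : Fin (n-1) → Fin n → Pt n → ℝ) (a b : Fin (n-1)) (p : Pt n) :
    Gs fc p (vb E a p) (vb E b p) = gb fc E p a b := by
  simp only [vb, Gs_vert, gb, mul_assoc]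

theorem fderiv_sum_sum_mul_mul {ι V : Type*} [Fintype ι] [NormedAddCommGroup V]
    [NormedSpace ℝ V] {u : ι → ι → V → ℝ} {c d : ι → V → ℝ} {p : V}
    (hu : ∀ i j, DifferentiableAt ℝ (u i j) p) (hc : ∀ i, DifferentiableAt ℝ (c i) p)
    (hd : ∀ j, DifferentiableAt ℝ (d j) p) (z : V) :
    fderiv ℝ (fun q => ∑ i, ∑ j, u i j q * (c i q * d j q)) p z
      = ∑ i, ∑ j, (fderiv ℝ (u i j) p z * (c i p * d j p)
          + u i j p * (fderiv ℝ (c i) p z * d j p + c i p * fderiv ℝ (d j) p z)) := by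
  have huc : ∀ i j, HasFDerivAt (fun q => u i j q * (c i q * d j q))
      (u i j p • (c i p • fderiv ℝ (d j) p + d j p • fderiv ℝ (c i) p)
        + (c i p * d j p) • fderiv ℝ (u i j) p) p := fun i j =>
    (hu i j).hasFDerivAt.mul ((hc i).hasFDerivAt.mul (hd j).hasFDerivAt)
  rw [(HasFDerivAt.fun_sum fun i _ => HasFDerivAt.fun_sum fun j _ => huc i j).fderiv]
  simp only [sum_apply, add_apply, smul_apply, smul_eq_mul]
  refine Finset.sum_congr rfl fun i _ => Finset.sum_congr rfl fun j _ => ?_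
  ring

theorem contDiffOn_vb {E : Fin (n-1) → Fin n → Pt n → ℝ}
    (hE : ∀ a i, ContDiffOn ℝ (⊤ : ℕ∞) (E a i) fc.U) (a : Fin (n-1)) :
    ContDiffOn ℝ (⊤ : ℕ∞) (vb E a) fc.U :=
  contDiffOn_const.prodMk (contDiffOn_pi.2 (hE a))

theorem fderiv_vb_apply {E : Fin (n-1) → Fin n → Pt n → ℝ} {a : Fin (n-1)} {p : Pt n}
    (h : ∀ i, DifferentiableAt ℝ (E a i) p) (z : Pt n) :
    fderiv ℝ (vb E a) p z = ((0 : Fin n → ℝ), fun i => fderiv ℝ (E a i) p z) := by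
  have H : HasFDerivAt (vb E a)
      ((0 : Pt n →L[ℝ] (Fin n → ℝ)).prod
        (ContinuousLinearMap.pi fun i => fderiv ℝ (E a i) p)) p :=
    (hasFDerivAt_const _ _).prodMk (hasFDerivAt_pi.2 fun i => (h i).hasFDerivAt)
  rw [H.fderiv]
  rfl

theorem lie_vb_LV (E : Fin (n-1) → Fin n → Pt n → ℝ) (a : Fin (n-1)) (p : Pt n) :
    lie (vb E a) LV p = vb E a p - fderiv ℝ (vb E a) p (LV p) := by
  rw [lie, fderiv_LV_apply, LV_of_fst_eq_zero rfl]

theorem Dv_LV_Gs_vb_vb {E : Fin (n-1) → Fin n → Pt n → ℝ} {a b : Fin (n-1)} {p : Pt n}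
    (hp : p ∈ fc.U) (ha : ∀ i, DifferentiableAt ℝ (E a i) p)
    (hb : ∀ i, DifferentiableAt ℝ (E b i) p) :
    Dv LV (fun q => Gs fc q (vb E a q) (vb E b q)) p
      = Gs fc p (fderiv ℝ (vb E a) p (LV p)) (vb E b p)
        + Gs fc p (vb E a p) (fderiv ℝ (vb E b) p (LV p)) := by
  have hg : ∀ i j, DifferentiableAt ℝ (fc.g i j) p := fun i j =>
    ((fc.gsmooth i j).contDiffAt (fc.hUopen.mem_nhds hp)).differentiableAt (by simp)
  simp only [Dv, vb, Gs_vert]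
  rw [fderiv_sum_sum_mul_mul hg ha hb, ← vb, ← vb, fderiv_vb_apply ha, fderiv_vb_apply hb]
  have hLg : ∀ i j, fderiv ℝ (fc.g i j) p (LV p) = 0 := fun i j => Dv_LV_g fc i j hp
  simp only [vb, Gs_vert, hLg, zero_mul, zero_add, mul_add, Finset.sum_add_distrib]

theorem Gs_nab_add_nab_swap {nab : VF n → VF n → VF n} (hnab : IsLeviCivita fc nab)
    {X Y Z : VF n} (hX : ContDiffOn ℝ (⊤ : ℕ∞) X fc.U) (hY : ContDiffOn ℝ (⊤ : ℕ∞) Y fc.U)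
    (hZ : ContDiffOn ℝ (⊤ : ℕ∞) Z fc.U) {p : Pt n} (hp : p ∈ fc.U) :
    Gs fc p (nab X Y p + nab Y X p) (Z p)
      = Dv X (fun q => Gs fc q (Y q) (Z q)) p + Dv Y (fun q => Gs fc q (X q) (Z q)) p
        - Dv Z (fun q => Gs fc q (X q) (Y q)) p
        - Gs fc p (lie X Z p) (Y p) - Gs fc p (lie Y Z p) (X p) := by
  have hXY := hnab X Y Z hX hY hZ p hp
  have hYX := hnab Y X Z hY hX hZ p hp
  have hGsYX : (fun q => Gs fc q (Y q) (X q)) =ᶠ[nhds p] fun q => Gs fc q (X q) (Y q) :=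
    Filter.eventuallyEq_of_mem (fc.hUopen.mem_nhds hp) fun q hq => Gs_comm fc hq _ _
  have hlie : Gs fc p (lie X Y p) (Z p) + Gs fc p (lie Y X p) (Z p) = 0 := by
    rw [← Gs_add_left, show lie X Y p + lie Y X p = 0 by simp only [lie]; abel]
    simp [Gs, dely]
  simp only [Dv] at hXY hYX ⊢
  rw [hGsYX.fderiv_eq] at hYX
  rw [Gs_add_left]
  linarith

theorem Gs_nab_vb_add_nab_vb_LV {E : Fin (n-1) → Fin n → Pt n → ℝ} (hE : IsAdaptedFrame fc E)
    {nab : VF n → VF n → VF n} (hnab : IsLeviCivita fc nab) (a b : Fin (n-1)) {p : Pt n}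
    (hp : p ∈ fc.U) :
    Gs fc p (nab (vb E a) (vb E b) p + nab (vb E b) (vb E a) p) (LV p) = -2 * gb fc E p a b := by
  obtain ⟨hEsmooth, -, hEorth⟩ := hE
  have hvb := contDiffOn_vb fc hEsmooth
  have hEdiff : ∀ c i, DifferentiableAt ℝ (E c i) p := fun c i =>
    ((hEsmooth c i).contDiffAt (fc.hUopen.mem_nhds hp)).differentiableAt (by simp)
  have horth : ∀ c d, Dv (vb E c) (fun q => Gs fc q (vb E d q) (LV q)) p = 0 := fun c d => by
    have h0 : (fun q => Gs fc q (vb E d q) (LV q)) =ᶠ[nhds p] fun _ => 0 :=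
      Filter.eventuallyEq_of_mem (fc.hUopen.mem_nhds hp) (hEorth d)
    rw [Dv, h0.fderiv_eq, fderiv_const_apply, zero_apply]
  rw [Gs_nab_add_nab_swap fc hnab (hvb a) (hvb b) contDiff_LV.contDiffOn hp, horth, horth,
    Dv_LV_Gs_vb_vb fc hp (hEdiff a) (hEdiff b), lie_vb_LV, lie_vb_LV, Gs_sub_left, Gs_sub_left,
    Gs_comm fc hp (vb E a p) (fderiv ℝ (vb E b) p (LV p)), Gs_comm fc hp (vb E b p), Gs_vb_vb]
  ring

theorem sum_sum_pullback_quadratic {ι κ : Type*} [Fintype ι] [Fintype κ] (A : ι → ι → ℝ)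
    (e : κ → ι → ℝ) (v : κ → ℝ) :
    ∑ a, ∑ b, (∑ i, ∑ j, A i j * e a i * e b j) * v a * v b
      = ∑ i, ∑ j, A i j * (∑ a, v a * e a i) * (∑ b, v b * e b j) := by
  simp only [Finset.sum_mul, Finset.mul_sum]
  calc _ = ∑ a, ∑ i, ∑ b, ∑ j, A i j * e a i * e b j * v a * v b :=
        Finset.sum_congr rfl fun _ _ => Finset.sum_comm
    _ = ∑ i, ∑ a, ∑ j, ∑ b, A i j * e a i * e b j * v a * v b :=
        Finset.sum_comm.trans (Finset.sum_congr rfl fun _ _ =>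
          Finset.sum_congr rfl fun _ _ => Finset.sum_comm)
    _ = _ := Finset.sum_congr rfl fun _ _ => Finset.sum_comm.trans <| Finset.sum_congr rfl
          fun _ _ => Finset.sum_comm.trans <| Finset.sum_congr rfl fun _ _ =>
            Finset.sum_congr rfl fun _ _ => by ring

theorem gb_quadratic_pos {E : Fin (n-1) → Fin n → Pt n → ℝ} {p : Pt n} (hp : p ∈ fc.U)
    (hE : LinearIndependent ℝ fun a i => E a i p) {v : Fin (n-1) → ℝ} (hv : v ≠ 0) :
    0 < ∑ a, ∑ b, gb fc E p a b * v a * v b := by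
  have hw : (fun i => ∑ a, v a * E a i p) ≠ 0 := fun h => hv <| funext <|
    Fintype.linearIndependent_iff.1 hE v <| funext fun i => by
      simpa [Finset.sum_apply] using congrFun h i
  rw [show ∑ a, ∑ b, gb fc E p a b * v a * v b = _ from
    sum_sum_pullback_quadratic (fun i j => fc.g i j p) (fun a i => E a i p) v]
  exact fc.gposdef p hp _ hw

/-- For any Finsler manifold `(M,F)`, the Sasaki metric `G`
on `TM` is not bundle-like for the one-dimensional foliation spanned by the
vertical Liouville field `L`, nor for the two-dimensional foliation spanned by
`L` and the horizontal Liouville field `ξ`: one has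
`G(∇_{∂̄/∂̄y^a} ∂̄/∂̄y^b + ∇_{∂̄/∂̄y^b} ∂̄/∂̄y^a, L) = −2 g_{ab}`, and
`g_{ab} = 0` is impossible since `(g_{ab})` is positive definite. -/
theorem L_and_LXi_not_bundle_like {n : ℕ} (hn : 2 ≤ n) (fc : Chart n)
    (hU : fc.U.Nonempty)
    (E : Fin (n-1) → Fin n → Pt n → ℝ) (hE : IsAdaptedFrame fc E)
    (nab : VF n → VF n → VF n) (hnab : IsLeviCivita fc nab) :
    (∀ a b : Fin (n-1), ∀ p ∈ fc.U,
      Gs fc p (nab (vb E a) (vb E b) p + nab (vb E b) (vb E a) p) (LV p)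
        = -2 * gb fc E p a b) ∧
    (∀ p ∈ fc.U, ∀ v : Fin (n-1) → ℝ, v ≠ 0 →
      0 < ∑ a, ∑ b, gb fc E p a b * v a * v b) ∧
    ¬ (∀ X Y : VF n, ContDiffOn ℝ (⊤ : ℕ∞) X fc.U →
        ContDiffOn ℝ (⊤ : ℕ∞) Y fc.U →
        (∀ p ∈ fc.U, InVperp fc p (X p)) → (∀ p ∈ fc.U, InVperp fc p (Y p)) →
        ∀ Z : VF n, ContDiffOn ℝ (⊤ : ℕ∞) Z fc.U →
        (∀ p ∈ fc.U, InL p (Z p)) →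
        ∀ p ∈ fc.U, Gs fc p (nab X Y p + nab Y X p) (Z p) = 0) ∧
    ¬ (∀ X Y : VF n, ContDiffOn ℝ (⊤ : ℕ∞) X fc.U →
        ContDiffOn ℝ (⊤ : ℕ∞) Y fc.U →
        (∀ p ∈ fc.U, InLXiPerp fc p (X p)) →
        (∀ p ∈ fc.U, InLXiPerp fc p (Y p)) →
        ∀ Z : VF n, ContDiffOn ℝ (⊤ : ℕ∞) Z fc.U →
        (∀ p ∈ fc.U, InLXi fc p (Z p)) →
        ∀ p ∈ fc.U, Gs fc p (nab X Y p + nab Y X p) (Z p) = 0) := by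
  obtain ⟨p, hp⟩ := hU
  have hsymm := Gs_nab_vb_add_nab_vb_LV fc hE hnab
  obtain ⟨hEsmooth, hEli, hEorth⟩ := hE
  let a : Fin (n-1) := ⟨0, by omega⟩
  have hgaa : gb fc E p a a ≠ 0 := (fc.gposdef p hp _ ((hEli p hp).ne_zero a)).ne'
  have hva := contDiffOn_vb fc hEsmooth a
  have hLV : ContDiffOn ℝ (⊤ : ℕ∞) (LV (n := n)) fc.U := contDiff_LV.contDiffOn
  refine ⟨fun a b p hp => hsymm a b hp, fun p hp v hv => gb_quadratic_pos fc hp (hEli p hp) hv,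
    fun hbl => hgaa ?_, fun hbl => hgaa ?_⟩
  · have h0 := hbl _ _ hva hva (hEorth a) (hEorth a) LV hLV
      (fun q _ => ⟨1, (one_smul ℝ _).symm⟩) p hp
    linarith [hsymm a a hp]
  · have hperp : ∀ q ∈ fc.U, InLXiPerp fc q (vb E a q) := fun q hq =>
      ⟨hEorth a q hq, Gs_vert_XI fc q _⟩
    have h0 := hbl _ _ hva hva hperp hperp LV hLV (fun q _ => ⟨1, 0, by simp⟩) p hp
    linarith [hsymm a a hp]

end FinslerFoliations

end
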